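/- For a unit vector (r_x, r_y, r_z) ∈ ℝ³, the sum h((1+r_x)/2) + h((1+r_y)/2) + h((1+r_z)/2) ≥ 2, where h is the binary entropy function in bits, and the minimum 2 is attained exactly when (r_x, r_y, r_z) is a signed standard basis vector. -/

import Mathlib

/-- Binary entropy function in bits. -/
noncomputable def binEnt (t : ℝ) : ℝ :=
  -(t * Real.logb 2 t) - (1 - t) * Real.logb 2 (1 - t)

/-!
Each term obeys the one-dimensional bound `h((1 + r)/2) ≥ 1 - r²` for `|r| ≤ 1`, with equality
only at `r ∈ {0, ±1}`; summing over the three coordinates of a unit vector gives `≥ 3 - 1 = 2`,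
and equality forces every coordinate into `{0, ±1}`, i.e. a signed basis vector.

In nats the bound says `G r = -(1+r) log(1+r) - (1-r) log(1-r) + 2 log 2 · r² ≥ 0`. The even
function `G` vanishes at `0` and `±1`, and `G'' = 4 log 2 - 2/(1 - r²)` is positive on `[0, c)`
and negative on `(c, 1)`, where `c² = 1 - 1/(2 log 2)`. Since also `G'(0) = 0`, `G` increases strictly on `[0, c]`, and being
concave on `[c, 1]` with `G c > 0 = G 1` it stays positive on `(c, 1)`.
-/

open Real Set

lemma pos_of_strictMonoOn_of_concaveOn {f : ℝ → ℝ} {a b c x : ℝ} (hac : a < c)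
    (hmono : StrictMonoOn f (Icc a c)) (hconc : ConcaveOn ℝ (Icc c b) f)
    (hfa : f a = 0) (hfb : 0 ≤ f b) (hx : x ∈ Ioo a b) : 0 < f x := by
  have hfc : 0 < f c := hfa ▸ hmono (left_mem_Icc.2 hac.le) (right_mem_Icc.2 hac.le) hac
  rcases le_or_gt x c with hxc | hcx
  · exact hfa ▸ hmono (left_mem_Icc.2 hac.le) ⟨hx.1.le, hxc⟩ hx.1
  have hcb : c ≤ b := hcx.le.trans hx.2.le
  rcases lt_or_ge (f x) (f c) with hlt | hge
  · have hseg : x ∈ openSegment ℝ b c := by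
      rw [openSegment_symm, openSegment_eq_Ioo (hcx.trans hx.2)]
      exact ⟨hcx, hx.2⟩
    exact hfb.trans_lt <| hconc.left_lt_of_lt_right (right_mem_Icc.2 hcb) (left_mem_Icc.2 hcb)
      hseg hlt
  · exact hfc.trans_le hge

lemma binEnt_eq_negMulLog (t : ℝ) : binEnt t = (negMulLog t + negMulLog (1 - t)) / log 2 := by
  simp only [binEnt, logb, negMulLog]
  ring

noncomputable def entropyGap (r : ℝ) : ℝ :=
  negMulLog (1 + r) + negMulLog (1 - r) + 2 * log 2 * r ^ 2

lemma binEnt_half_add (r : ℝ) :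
    binEnt ((1 + r) / 2) = 1 - r ^ 2 + entropyGap r / (2 * log 2) := by
  have hlog : negMulLog (2⁻¹ : ℝ) = log 2 / 2 := by
    simp only [negMulLog, log_inv]
    ring
  have h1 : (1 + r) / 2 = (1 + r) * 2⁻¹ := div_eq_mul_inv _ _
  have h2 : 1 - (1 + r) / 2 = (1 - r) * 2⁻¹ := by ring
  have hl2 : log 2 ≠ 0 := (log_pos one_lt_two).ne'
  rw [binEnt_eq_negMulLog, h2, h1, negMulLog_mul, negMulLog_mul, hlog, entropyGap]
  field_simp
  ring

lemma entropyGap_neg (r : ℝ) : entropyGap (-r) = entropyGap r := by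
  simp only [entropyGap, sub_neg_eq_add, ← sub_eq_add_neg, neg_sq]
  ring

lemma entropyGap_zero : entropyGap 0 = 0 := by simp [entropyGap]

lemma entropyGap_one : entropyGap 1 = 0 := by
  simp only [entropyGap, negMulLog, sub_self]
  norm_num

lemma continuous_entropyGap : Continuous entropyGap := by
  unfold entropyGap
  fun_prop

noncomputable def entropyGapDeriv (r : ℝ) : ℝ := log (1 - r) - log (1 + r) + 4 * log 2 * r

lemma hasDerivAt_entropyGap {r : ℝ} (h₁ : -1 < r) (h₂ : r < 1) :
    HasDerivAt entropyGap (entropyGapDeriv r) r := by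
  have hp : HasDerivAt (fun r => negMulLog (1 + r)) (-log (1 + r) - 1) r := by
    simpa [Function.comp_def] using (hasDerivAt_negMulLog (by linarith : 1 + r ≠ 0)).comp r
      ((hasDerivAt_id' r).const_add 1)
  have hm : HasDerivAt (fun r => negMulLog (1 - r)) (-(-log (1 - r) - 1)) r := by
    simpa [Function.comp_def] using (hasDerivAt_negMulLog (by linarith : 1 - r ≠ 0)).comp r
      ((hasDerivAt_id' r).const_sub 1)
  have hq : HasDerivAt (fun r => 2 * log 2 * r ^ 2) (2 * log 2 * (2 * r)) r := by
    simpa using (hasDerivAt_pow 2 r).const_mul (2 * log 2)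
  refine ((hp.add hm).add hq).congr_deriv ?_
  rw [entropyGapDeriv]
  ring

lemma hasDerivAt_entropyGapDeriv {r : ℝ} (h₁ : -1 < r) (h₂ : r < 1) :
    HasDerivAt entropyGapDeriv (4 * log 2 - 2 / (1 - r ^ 2)) r := by
  have hm : HasDerivAt (fun r => log (1 - r)) (-1 / (1 - r)) r :=
    ((hasDerivAt_id' r).const_sub 1).log (by linarith)
  have hp : HasDerivAt (fun r => log (1 + r)) (1 / (1 + r)) r :=
    ((hasDerivAt_id' r).const_add 1).log (by linarith)
  have hl : HasDerivAt (fun r => 4 * log 2 * r) (4 * log 2) r := by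
    simpa using (hasDerivAt_id r).const_mul (4 * log 2)
  refine ((hm.sub hp).add hl).congr_deriv ?_
  have : 1 - r ≠ 0 := by linarith
  have : 1 + r ≠ 0 := by linarith
  have : 1 - r ^ 2 ≠ 0 := by nlinarith
  field_simp
  ring

lemma one_lt_two_mul_log_two : 1 < 2 * log 2 := by
  linarith [log_two_gt_d9]

/-- The zero of `entropyGap'' r = 4 log 2 - 2 / (1 - r ^ 2)` in `(0, 1)`. -/
noncomputable def entropyGapInflection : ℝ := √(1 - 1 / (2 * log 2))

local notation "c" => entropyGapInflection

lemma entropyGapInflection_pos : 0 < c := by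
  refine sqrt_pos.2 (sub_pos.2 ?_)
  rw [div_lt_one (by linarith [one_lt_two_mul_log_two])]
  exact one_lt_two_mul_log_two

lemma two_mul_log_two_mul_one_sub_entropyGapInflection_sq : 2 * log 2 * (1 - c ^ 2) = 1 := by
  have h : 0 < 2 * log 2 := by linarith [one_lt_two_mul_log_two]
  rw [entropyGapInflection, sq_sqrt (sub_nonneg.2 ?_)]
  · field_simp
    ring
  · rw [div_le_one h]
    exact one_lt_two_mul_log_two.le

lemma entropyGapInflection_lt_one : c < 1 := by
  have h : 0 < 2 * log 2 * (1 - c ^ 2) := by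
    rw [two_mul_log_two_mul_one_sub_entropyGapInflection_sq]
    exact one_pos
  have hc : 0 < 1 - c ^ 2 := pos_of_mul_pos_right h (by positivity)
  nlinarith [entropyGapInflection_pos]

lemma entropyGapDeriv2_pos {r : ℝ} (hr : r ^ 2 < c ^ 2) : 0 < 4 * log 2 - 2 / (1 - r ^ 2) := by
  have hc := two_mul_log_two_mul_one_sub_entropyGapInflection_sq
  have hr1 : 0 < 1 - r ^ 2 := by nlinarith [entropyGapInflection_lt_one, entropyGapInflection_pos]
  rw [sub_pos, div_lt_iff₀ hr1]
  nlinarith [log_pos one_lt_two]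

lemma entropyGapDeriv2_nonpos {r : ℝ} (hcr : c ^ 2 ≤ r ^ 2) (hr : r ^ 2 < 1) :
    4 * log 2 - 2 / (1 - r ^ 2) ≤ 0 := by
  have hc := two_mul_log_two_mul_one_sub_entropyGapInflection_sq
  rw [sub_nonpos, le_div_iff₀ (sub_pos.2 hr)]
  nlinarith [log_pos one_lt_two]

lemma entropyGapDeriv_pos {r : ℝ} (hr : r ∈ Ioc 0 c) : 0 < entropyGapDeriv r := by
  have hmono : StrictMonoOn entropyGapDeriv (Icc 0 c) := by
    refine strictMonoOn_of_hasDerivWithinAt_pos (f' := fun r => 4 * log 2 - 2 / (1 - r ^ 2))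
      (convex_Icc 0 c) (fun x hx => ?_) (fun x hx => ?_) (fun x hx => ?_)
    · exact (hasDerivAt_entropyGapDeriv (by linarith [hx.1])
        (hx.2.trans_lt entropyGapInflection_lt_one)).continuousAt.continuousWithinAt
    · rw [interior_Icc] at hx
      exact (hasDerivAt_entropyGapDeriv (by linarith [hx.1])
        (hx.2.trans entropyGapInflection_lt_one)).hasDerivWithinAt
    · rw [interior_Icc] at hx
      exact entropyGapDeriv2_pos (pow_lt_pow_left₀ hx.2 hx.1.le two_ne_zero)
  have h0 : entropyGapDeriv 0 = 0 := by simp [entropyGapDeriv]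
  exact h0 ▸ hmono (left_mem_Icc.2 entropyGapInflection_pos.le) (Ioc_subset_Icc_self hr) hr.1

lemma strictMonoOn_entropyGap : StrictMonoOn entropyGap (Icc 0 c) := by
  refine strictMonoOn_of_hasDerivWithinAt_pos (f' := entropyGapDeriv) (convex_Icc 0 c)
    continuous_entropyGap.continuousOn (fun x hx => ?_) (fun x hx => ?_)
  all_goals rw [interior_Icc] at hx
  · exact (hasDerivAt_entropyGap (by linarith [hx.1])
      (hx.2.trans entropyGapInflection_lt_one)).hasDerivWithinAt
  · exact entropyGapDeriv_pos (Ioo_subset_Ioc_self hx)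

lemma concaveOn_entropyGap : ConcaveOn ℝ (Icc c 1) entropyGap := by
  refine concaveOn_of_hasDerivWithinAt2_nonpos (f' := entropyGapDeriv)
    (f'' := fun r => 4 * log 2 - 2 / (1 - r ^ 2)) (convex_Icc c 1)
    continuous_entropyGap.continuousOn (fun x hx => ?_) (fun x hx => ?_) (fun x hx => ?_)
  all_goals
    rw [interior_Icc] at hx
    have h₁ : -1 < x := by linarith [hx.1, entropyGapInflection_pos]
  · exact (hasDerivAt_entropyGap h₁ hx.2).hasDerivWithinAt
  · exact (hasDerivAt_entropyGapDeriv h₁ hx.2).hasDerivWithinAt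
  · exact entropyGapDeriv2_nonpos (pow_le_pow_left₀ entropyGapInflection_pos.le hx.1.le 2)
      ((sq_lt_one_iff_abs_lt_one x).2 (abs_lt.2 ⟨h₁, hx.2⟩))

lemma entropyGap_pos {r : ℝ} (hr : r ∈ Ioo 0 1) : 0 < entropyGap r :=
  pos_of_strictMonoOn_of_concaveOn entropyGapInflection_pos strictMonoOn_entropyGap
    concaveOn_entropyGap entropyGap_zero entropyGap_one.ge hr

lemma entropyGap_abs (r : ℝ) : entropyGap |r| = entropyGap r := by
  rcases abs_choice r with h | h <;> rw [h]
  exact entropyGap_neg r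

lemma entropyGap_nonneg {r : ℝ} (hr : |r| ≤ 1) : 0 ≤ entropyGap r := by
  rw [← entropyGap_abs]
  rcases (abs_nonneg r).eq_or_lt with h0 | h0
  · rw [← h0, entropyGap_zero]
  rcases hr.eq_or_lt with h1 | h1
  · rw [h1, entropyGap_one]
  · exact (entropyGap_pos ⟨h0, h1⟩).le

lemma entropyGap_eq_zero_iff {r : ℝ} (hr : |r| ≤ 1) : entropyGap r = 0 ↔ r = 0 ∨ |r| = 1 := by
  rw [← entropyGap_abs, ← abs_eq_zero (a := r)]
  refine ⟨fun h => ?_, ?_⟩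
  · by_contra! hne
    exact (entropyGap_pos ⟨(abs_nonneg r).lt_of_ne hne.1.symm, hr.lt_of_ne hne.2⟩).ne' h
  · rintro (h | h) <;> rw [h]
    exacts [entropyGap_zero, entropyGap_one]

lemma one_sub_sq_le_binEnt {r : ℝ} (hr : |r| ≤ 1) : 1 - r ^ 2 ≤ binEnt ((1 + r) / 2) := by
  rw [binEnt_half_add, le_add_iff_nonneg_right]
  exact div_nonneg (entropyGap_nonneg hr) (by linarith [one_lt_two_mul_log_two])

lemma binEnt_eq_one_sub_sq_iff {r : ℝ} (hr : |r| ≤ 1) :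
    binEnt ((1 + r) / 2) = 1 - r ^ 2 ↔ r = 0 ∨ |r| = 1 := by
  rw [binEnt_half_add, add_eq_left, div_eq_zero_iff, entropyGap_eq_zero_iff hr]
  have : 2 * log 2 ≠ 0 := by linarith [one_lt_two_mul_log_two]
  simp [this]

lemma zero_or_abs_eq_one_iff_signed_basis {x y z : ℝ} (h : x ^ 2 + y ^ 2 + z ^ 2 = 1) :
    ((x = 0 ∨ |x| = 1) ∧ (y = 0 ∨ |y| = 1) ∧ (z = 0 ∨ |z| = 1)) ↔
      ((|x| = 1 ∧ y = 0 ∧ z = 0) ∨ (|y| = 1 ∧ x = 0 ∧ z = 0) ∨ (|z| = 1 ∧ x = 0 ∧ y = 0)) := by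
  rw [← sq_abs x, ← sq_abs y, ← sq_abs z] at h
  constructor
  · rintro ⟨hx | hx, hy | hy, hz | hz⟩ <;> simp_all
  · rintro (⟨hx, hy, hz⟩ | ⟨hy, hx, hz⟩ | ⟨hz, hx, hy⟩) <;> simp [*]

theorem stmt_8 (rx ry rz : ℝ) (hunit : rx ^ 2 + ry ^ 2 + rz ^ 2 = 1) :
    2 ≤ binEnt ((1 + rx) / 2) + binEnt ((1 + ry) / 2) + binEnt ((1 + rz) / 2) ∧
    (binEnt ((1 + rx) / 2) + binEnt ((1 + ry) / 2) + binEnt ((1 + rz) / 2) = 2 ↔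
      ((|rx| = 1 ∧ ry = 0 ∧ rz = 0) ∨ (|ry| = 1 ∧ rx = 0 ∧ rz = 0) ∨
        (|rz| = 1 ∧ rx = 0 ∧ ry = 0))) := by
  have hx : |rx| ≤ 1 := (sq_le_one_iff_abs_le_one rx).1 (by nlinarith)
  have hy : |ry| ≤ 1 := (sq_le_one_iff_abs_le_one ry).1 (by nlinarith)
  have hz : |rz| ≤ 1 := (sq_le_one_iff_abs_le_one rz).1 (by nlinarith)
  have lx := one_sub_sq_le_binEnt hx
  have ly := one_sub_sq_le_binEnt hy
  have lz := one_sub_sq_le_binEnt hz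
  refine ⟨by linarith, ?_⟩
  rw [← zero_or_abs_eq_one_iff_signed_basis hunit, ← binEnt_eq_one_sub_sq_iff hx,
    ← binEnt_eq_one_sub_sq_iff hy, ← binEnt_eq_one_sub_sq_iff hz]
  constructor
  · intro h
    refine ⟨?_, ?_, ?_⟩ <;> linarith
  · rintro ⟨ex, ey, ez⟩
    linarith
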